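/- Let a, D, t be real numbers with a ≥ 0, D > 0 and t > 0. Then the improper integral ∫ₐ^∞ erfc((z − a)/√(4 D t)) · z dz converges and equals D t + a · √(4 D t / π). (This is the key integral in the paper's computation of the transient-state expected co-channel interference E_C^Transient = 4 λ π p₁ N a (D K T_s + a √(4 D K T_s/π)), with t = K T_s.) -/

import Mathlib

open Real MeasureTheory

/-- The complementary error function: erfc x = (2/√π) ∫ₓ^∞ exp(−u²) du. -/
noncomputable def erfc (x : ℝ) : ℝ :=
  (2 / Real.sqrt Real.pi) * ∫ u in Set.Ioi x, Real.exp (-u ^ 2)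

/-!
Substituting `x = (z - a) / s` with `s = √(4Dt)` turns the integrand into
`s · erfc x · (a + s x)`. Both `erfc x` and `x erfc x` have explicit primitives, built from
`erfc` and `exp (-x²)`, which vanish at `+∞` because `erfc` decays like `exp (-x)`; their
values at `0` give `∫₀^∞ erfc = 1/√π` and `∫₀^∞ x erfc x = 1/4`, so the integral is
`a s / √π + s² / 4`. Integrability comes for free: the integrand is nonnegative and has a
primitive with a limit at `+∞`.
-/

open Set Filter Topology Asymptotics

theorem hasDerivAt_integral_Ioi {E : Type*} [NormedAddCommGroup E] [NormedSpace ℝ E]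
    [CompleteSpace E] {f : ℝ → E} (hf : Integrable f) {x : ℝ} (hx : ContinuousAt f x) :
    HasDerivAt (fun y => ∫ u in Ioi y, f u) (-f x) x := by
  have hsplit : (fun y => ∫ u in Ioi y, f u) =
      fun y => (∫ u in Ioi 0, f u) - ∫ u in 0..y, f u := by
    funext y
    rw [← intervalIntegral.integral_Ioi_sub_Ioi' hf.integrableOn hf.integrableOn, sub_sub_cancel]
  rw [hsplit, ← zero_sub]
  exact (hasDerivAt_const x _).sub (intervalIntegral.integral_hasDerivAt_right
    (hf.intervalIntegrable) hf.aestronglyMeasurable.stronglyMeasurableAtFilter hx)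

theorem integrable_exp_neg_sq : Integrable fun u : ℝ => exp (-u ^ 2) := by
  simpa using integrable_exp_neg_mul_sq one_pos

theorem hasDerivAt_erfc (x : ℝ) :
    HasDerivAt erfc (-(2 / √π * exp (-x ^ 2))) x := by
  rw [← mul_neg]
  exact (hasDerivAt_integral_Ioi integrable_exp_neg_sq (by fun_prop)).const_mul _

theorem erfc_nonneg (x : ℝ) : 0 ≤ erfc x :=
  mul_nonneg (by positivity) (setIntegral_nonneg measurableSet_Ioi fun u _ => (exp_pos _).le)

theorem erfc_zero : erfc 0 = 1 := by
  have hhalf : ∫ u in Ioi (0 : ℝ), exp (-u ^ 2) = √π / 2 := by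
    simpa using integral_gaussian_Ioi 1
  rw [erfc, hhalf]
  field_simp

theorem exp_neg_sq_le_exp_neg {x : ℝ} (hx : 1 ≤ x) : exp (-x ^ 2) ≤ exp (-x) :=
  exp_le_exp.2 (by nlinarith)

theorem integral_Ioi_exp_neg_sq_le {x : ℝ} (hx : 1 ≤ x) :
    ∫ u in Ioi x, exp (-u ^ 2) ≤ exp (-x) := by
  calc ∫ u in Ioi x, exp (-u ^ 2)
      ≤ ∫ u in Ioi x, exp (-u) :=
        setIntegral_mono_on integrable_exp_neg_sq.integrableOn
          (by simpa using exp_neg_integrableOn_Ioi x one_pos) measurableSet_Ioi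
          fun u hu => exp_neg_sq_le_exp_neg (hx.trans hu.le)
    _ = exp (-x) := integral_exp_neg_Ioi x

theorem exp_neg_sq_isBigO_exp_neg : (fun x : ℝ => exp (-x ^ 2)) =O[atTop] fun x => exp (-x) :=
  IsBigO.of_bound 1 <| (eventually_ge_atTop 1).mono fun x hx => by
    simpa [abs_of_pos (exp_pos _)] using exp_neg_sq_le_exp_neg hx

theorem erfc_isBigO_exp_neg : erfc =O[atTop] fun x => exp (-x) :=
  IsBigO.of_bound (2 / √π) <| (eventually_ge_atTop 1).mono fun x hx => by
    rw [norm_of_nonneg (erfc_nonneg x), norm_of_nonneg (exp_pos _).le, erfc]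
    gcongr
    exact integral_Ioi_exp_neg_sq_le hx

theorem tendsto_pow_mul_of_isBigO_exp_neg {f : ℝ → ℝ} (hf : f =O[atTop] fun x => exp (-x))
    (n : ℕ) : Tendsto (fun x => x ^ n * f x) atTop (𝓝 0) :=
  ((isBigO_refl (fun x : ℝ => x ^ n) atTop).mul hf).trans_tendsto
    (tendsto_pow_mul_exp_neg_atTop_nhds_zero n)

noncomputable def erfcPrimitive (x : ℝ) : ℝ :=
  x * erfc x - exp (-x ^ 2) / √π

noncomputable def mulErfcPrimitive (x : ℝ) : ℝ :=
  (x ^ 2 / 2 - 1 / 4) * erfc x - x * exp (-x ^ 2) / (2 * √π)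

theorem hasDerivAt_exp_neg_sq (x : ℝ) :
    HasDerivAt (fun y : ℝ => exp (-y ^ 2)) (-(2 * x) * exp (-x ^ 2)) x := by
  simpa [mul_comm] using ((hasDerivAt_pow 2 x).neg).exp

theorem hasDerivAt_erfcPrimitive (x : ℝ) : HasDerivAt erfcPrimitive (erfc x) x := by
  refine (((hasDerivAt_id' x).mul (hasDerivAt_erfc x)).sub
    ((hasDerivAt_exp_neg_sq x).div_const √π)).congr_deriv ?_
  field_simp
  ring

theorem hasDerivAt_mulErfcPrimitive (x : ℝ) : HasDerivAt mulErfcPrimitive (x * erfc x) x := by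
  have hpoly : HasDerivAt (fun y : ℝ => y ^ 2 / 2 - 1 / 4) x x := by
    simpa using ((hasDerivAt_pow 2 x).div_const 2).sub_const (1 / 4)
  refine ((hpoly.mul (hasDerivAt_erfc x)).sub
    (((hasDerivAt_id' x).mul (hasDerivAt_exp_neg_sq x)).div_const (2 * √π))).congr_deriv ?_
  field_simp
  ring

theorem tendsto_erfcPrimitive_atTop : Tendsto erfcPrimitive atTop (𝓝 0) := by
  have hlim := (tendsto_pow_mul_of_isBigO_exp_neg erfc_isBigO_exp_neg 1).sub
    ((tendsto_pow_mul_of_isBigO_exp_neg exp_neg_sq_isBigO_exp_neg 0).div_const √π)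
  simp only [pow_one, pow_zero, one_mul, zero_div, sub_zero] at hlim
  exact hlim

theorem tendsto_mulErfcPrimitive_atTop : Tendsto mulErfcPrimitive atTop (𝓝 0) := by
  have hlim := (((tendsto_pow_mul_of_isBigO_exp_neg erfc_isBigO_exp_neg 2).div_const 2).sub
    ((tendsto_pow_mul_of_isBigO_exp_neg erfc_isBigO_exp_neg 0).div_const 4)).sub
    ((tendsto_pow_mul_of_isBigO_exp_neg exp_neg_sq_isBigO_exp_neg 1).div_const (2 * √π))
  simp only [zero_div, sub_zero, pow_zero, one_mul, pow_one] at hlim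
  refine hlim.congr fun x => ?_
  rw [mulErfcPrimitive]
  ring

theorem erfcPrimitive_zero : erfcPrimitive 0 = -(1 / √π) := by
  simp [erfcPrimitive]

theorem mulErfcPrimitive_zero : mulErfcPrimitive 0 = -(1 / 4) := by
  simp [mulErfcPrimitive, erfc_zero]

theorem integrableOn_and_integral_Ioi_erfc_div_mul {a s : ℝ} (ha : 0 ≤ a) (hs : 0 < s) :
    IntegrableOn (fun z => erfc ((z - a) / s) * z) (Ioi a) ∧
      ∫ z in Ioi a, erfc ((z - a) / s) * z = a * s / √π + s ^ 2 / 4 := by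
  set G : ℝ → ℝ := fun z =>
    s * (a * erfcPrimitive ((z - a) / s) + s * mulErfcPrimitive ((z - a) / s))
  have hderiv : ∀ z ∈ Ici a, HasDerivAt G (erfc ((z - a) / s) * z) z := by
    intro z _
    have hscale : HasDerivAt (fun z => (z - a) / s) (1 / s) z := by
      simpa using ((hasDerivAt_id' z).sub_const a).div_const s
    refine (((((hasDerivAt_erfcPrimitive _).comp z hscale).const_mul a).add
      (((hasDerivAt_mulErfcPrimitive _).comp z hscale).const_mul s)).const_mul s).congr_deriv ?_
    field_simp
    ring
  have hlim : Tendsto G atTop (𝓝 0) := by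
    have hscale : Tendsto (fun z => (z - a) / s) atTop atTop :=
      (tendsto_atTop_add_const_right _ (-a) tendsto_id).atTop_div_const hs
    simpa using (((tendsto_erfcPrimitive_atTop.comp hscale).const_mul a).add
      ((tendsto_mulErfcPrimitive_atTop.comp hscale).const_mul s)).const_mul s
  have hnonneg : ∀ z ∈ Ioi a, 0 ≤ erfc ((z - a) / s) * z := fun z hz =>
    mul_nonneg (erfc_nonneg _) (ha.trans hz.out.le)
  refine ⟨integrableOn_Ioi_deriv_of_nonneg' hderiv hnonneg hlim, ?_⟩
  rw [integral_Ioi_of_hasDerivAt_of_nonneg' hderiv hnonneg hlim]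
  simp only [G, sub_self, zero_div, erfcPrimitive_zero, mulErfcPrimitive_zero]
  ring

/-- For a ≥ 0, D > 0, t > 0,
∫ₐ^∞ erfc((z−a)/√(4Dt))·z dz converges and equals D·t + a·√(4Dt/π). -/
theorem transient_cci_key_integral
    (a D t : ℝ) (ha : 0 ≤ a) (hD : 0 < D) (ht : 0 < t) :
    IntegrableOn (fun z : ℝ =>
      erfc ((z - a) / Real.sqrt (4 * D * t)) * z) (Set.Ioi a) ∧
    (∫ z in Set.Ioi a, erfc ((z - a) / Real.sqrt (4 * D * t)) * z)
      = D * t + a * Real.sqrt (4 * D * t / Real.pi) := by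
  have hpos : 0 < 4 * D * t := by positivity
  obtain ⟨hint, hval⟩ := integrableOn_and_integral_Ioi_erfc_div_mul ha (sqrt_pos.2 hpos)
  refine ⟨hint, hval.trans ?_⟩
  rw [sq_sqrt hpos.le, sqrt_div hpos.le]
  ring
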